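/- Let u be a quasi-definite moment functional on Π^d and let its Uvarov modification v at N distinct points ξ_1,…,ξ_N with nonzero masses λ_1,…,λ_N be quasi-definite. Then the kernels of u and v are related, for every m ≥ 0, by P_m(v;x,y) = P_m(u;x,y) − 𝖪_m(ξ,x)^t (I_N + Λ𝒦_m)^{−1} Λ 𝖪_m(ξ,y) + 𝖪_{m−1}(ξ,x)^t (I_N + Λ𝒦_{m−1})^{−1} Λ 𝖪_{m−1}(ξ,y) (with 𝖪_{−1} := 0), and, for every n ≥ 0, by K_n(v;x,y) = K_n(u;x,y) − 𝖪_n(ξ,x)^t (I_N + Λ𝒦_n)^{−1} Λ 𝖪_n(ξ,y). -/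

import Mathlib

open MvPolynomial Matrix

/-- The index set for monomials of total degree `n` in `d` variables:
multi-indices (exponent tuples) summing to `n`. Its cardinality is `r_n^d = C(n+d-1,n)`. -/
abbrev Idx (d n : ℕ) : Type := {ν : Fin d → ℕ // ν ∈ Finset.Nat.antidiagonalTuple d n}

/-- The monomial `x^ν` associated with a multi-index `ν` of total degree `n`;
the family `fun α : Idx d n => monIdx α` is the canonical vector `𝕏_n`. -/
noncomputable def monIdx {d n : ℕ} (α : Idx d n) : MvPolynomial (Fin d) ℝ :=
  MvPolynomial.monomial (Finsupp.equivFunOnFinite.symm α.1) 1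

/-- A polynomial system (PS): a sequence of vectors `ℙ_n` of size `r_n^d` whose
entries are polynomials of total degree `n`, the entries of `ℙ_0,…,ℙ_n` forming a
basis of the polynomials of total degree at most `n`. -/
structure PolySystem (d : ℕ) where
  vec : (n : ℕ) → Idx d n → MvPolynomial (Fin d) ℝ
  degree_eq : ∀ n α, (vec n α).totalDegree = n
  indep : LinearIndependent ℝ (fun p : (Σ n : ℕ, Idx d n) => vec p.1 p.2)
  spans : ∀ (n : ℕ) (p : MvPolynomial (Fin d) ℝ), p.totalDegree ≤ n →
    p ∈ Submodule.span ℝ {q | ∃ m ≤ n, ∃ α : Idx d m, q = vec m α}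

/-- `{ℙ_n}` is an orthogonal polynomial system (OPS) with respect to the moment
functional `u` : `⟨u, 𝕏_m ℙ_n^t⟩ = 0` for `m < n` and `⟨u, 𝕏_n ℙ_n^t⟩` nonsingular. -/
def IsOPS {d : ℕ} (u : MvPolynomial (Fin d) ℝ →ₗ[ℝ] ℝ) (P : PolySystem d) : Prop :=
  (∀ m n : ℕ, m < n → ∀ (α : Idx d m) (β : Idx d n), u (monIdx α * P.vec n β) = 0) ∧
  (∀ n : ℕ, IsUnit (Matrix.of fun α β : Idx d n => u (monIdx α * P.vec n β)).det)

/-- `u` is quasi-definite iff it admits an OPS. -/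
def QuasiDefinite {d : ℕ} (u : MvPolynomial (Fin d) ℝ →ₗ[ℝ] ℝ) : Prop :=
  ∃ P : PolySystem d, IsOPS u P

/-- `H_n = ⟨u, ℙ_n ℙ_n^t⟩`. -/
noncomputable def Hmat {d : ℕ} (u : MvPolynomial (Fin d) ℝ →ₗ[ℝ] ℝ) (P : PolySystem d)
    (n : ℕ) : Matrix (Idx d n) (Idx d n) ℝ :=
  Matrix.of fun α β => u (P.vec n α * P.vec n β)

/-- `P_m(u;x,y) = ℙ_m(x)^t H_m⁻¹ ℙ_m(y)`. -/
noncomputable def kerP {d : ℕ} (u : MvPolynomial (Fin d) ℝ →ₗ[ℝ] ℝ) (P : PolySystem d)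
    (m : ℕ) (x y : Fin d → ℝ) : ℝ :=
  ∑ α, ∑ β, eval x (P.vec m α) * (Hmat u P m)⁻¹ α β * eval y (P.vec m β)

/-- `kerLT u P n = K_{n-1}(u;·,·) = Σ_{m<n} P_m(u;·,·)`, so that `kerLT u P 0 = K_{-1} = 0`. -/
noncomputable def kerLT {d : ℕ} (u : MvPolynomial (Fin d) ℝ →ₗ[ℝ] ℝ) (P : PolySystem d)
    (n : ℕ) (x y : Fin d → ℝ) : ℝ :=
  ∑ m ∈ Finset.range n, kerP u P m x y

/-- `𝖯_n(ξ) = (ℙ_n(ξ_1)|⋯|ℙ_n(ξ_N))`. -/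
noncomputable def Pmat {d N : ℕ} (P : PolySystem d) (ξ : Fin N → (Fin d → ℝ)) (n : ℕ) :
    Matrix (Idx d n) (Fin N) ℝ :=
  Matrix.of fun α i => eval (ξ i) (P.vec n α)

/-- `Kmat u P ξ n = 𝒦_{n-1} = (K_{n-1}(u;ξ_i,ξ_j))_{i,j}`, with `𝒦_{-1} = 0`. -/
noncomputable def Kmat {d N : ℕ} (u : MvPolynomial (Fin d) ℝ →ₗ[ℝ] ℝ) (P : PolySystem d)
    (ξ : Fin N → (Fin d → ℝ)) (n : ℕ) : Matrix (Fin N) (Fin N) ℝ :=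
  Matrix.of fun i j => kerLT u P n (ξ i) (ξ j)

/-- `Kvec u P ξ n x = 𝖪_{n-1}(ξ,x) = (K_{n-1}(u;ξ_1,x),…,K_{n-1}(u;ξ_N,x))^t`, with `𝖪_{-1}=0`. -/
noncomputable def Kvec {d N : ℕ} (u : MvPolynomial (Fin d) ℝ →ₗ[ℝ] ℝ) (P : PolySystem d)
    (ξ : Fin N → (Fin d → ℝ)) (n : ℕ) (x : Fin d → ℝ) : Fin N → ℝ :=
  fun i => kerLT u P n (ξ i) x

/-- A PS is monic if the degree-`n` homogeneous part of the entry of `ℙ_n` indexed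
by `α` is exactly the monomial `x^α`. -/
def PolySystem.IsMonic {d : ℕ} (P : PolySystem d) : Prop :=
  ∀ (n : ℕ) (α : Idx d n) (ν : Fin d →₀ ℕ), (ν.sum fun _ e => e) = n →
    MvPolynomial.coeff ν (P.vec n α) = if ν = Finsupp.equivFunOnFinite.symm α.1 then 1 else 0

/-- Multiplication of a real matrix times a vector of polynomials. -/
noncomputable def matVec {d : ℕ} {a b : Type} [Fintype b] (M : Matrix a b ℝ)
    (w : b → MvPolynomial (Fin d) ℝ) (i : a) : MvPolynomial (Fin d) ℝ :=
  ∑ j, M i j • w j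

/-- The matrix `L_{n,i}` determined by `x_i 𝕏_n = L_{n,i} 𝕏_{n+1}`. -/
noncomputable def Lmat (d n : ℕ) (i : Fin d) : Matrix (Idx d n) (Idx d (n + 1)) ℝ :=
  Matrix.of fun α β => if β.1 = (fun j => α.1 j + if j = i then 1 else 0) then 1 else 0

/-- The unique multi-index of degree 0. -/
def zeroIdx {d : ℕ} : Idx d 0 :=
  ⟨fun _ => 0, by simp [Finset.Nat.mem_antidiagonalTuple]⟩

/-- The degree-2 multi-index `e_i + e_j`. -/
def e2 {d : ℕ} (i j : Fin d) : Idx d 2 :=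
  ⟨fun k => (if k = i then 1 else 0) + (if k = j then 1 else 0), by
    simp [Finset.Nat.mem_antidiagonalTuple, Finset.sum_add_distrib]⟩

/-- `A_{h,2} = Σ_{1≤i≤j≤d} a^{(2)}_{ij} L_{h,j} L_{h+1,i}`. -/
noncomputable def Amat2 {d : ℕ} (a2 : Idx d 2 → ℝ) (h : ℕ) :
    Matrix (Idx d h) (Idx d (h + 2)) ℝ :=
  ∑ i : Fin d, ∑ j : Fin d,
    if i ≤ j then a2 (e2 i j) • (Lmat d h j * Lmat d (h + 1) i) else 0

/-- The polynomial `λ(x) = a_2·𝕏_2 + a_1·𝕏_1 + a_0`. -/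
noncomputable def lamPoly {d : ℕ} (a2 : Idx d 2 → ℝ) (a1 : Idx d 1 → ℝ) (a0 : ℝ) :
    MvPolynomial (Fin d) ℝ :=
  (∑ α : Idx d 2, a2 α • monIdx α) + (∑ α : Idx d 1, a1 α • monIdx α) + MvPolynomial.C a0

/-!
Write `K_n^u(x, ·)` for the kernel polynomial of degree `n`; it reproduces `u` on polynomials of
degree `≤ n`. Computing `v (K_n^v(x, ·) K_n^u(y, ·))` once with the reproducing property of `v` and
once by expanding `v = u + Σ λ_i δ_{ξ_i}` gives
`K_n^u(x, y) = K_n^v(x, y) + Σ_i λ_i K_n^v(x, ξ_i) K_n^u(ξ_i, y)`.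
Putting `y = ξ_j` turns this into the linear system `a(x) (I + Λ𝒦_n) = 𝖪_n(ξ, x)` for the row
`a(x) = (K_n^v(x, ξ_i))_i`. The matrix `I + Λ𝒦_n` is invertible: a left null vector `w` makes
`q = Σ_i λ_i w_i K_n^u(ξ_i, ·)` a polynomial of degree `≤ n` that is `v`-orthogonal to all of
degree `≤ n`, while `q(ξ_j) = -w_j`; reproducing `q(ξ_j)` with `K_n^v(ξ_j, ·)` forces `w = 0`.
Solving for `a(x)` and substituting back gives `K_n(v)`, and `P_m = K_m - K_{m-1}` gives `P_m(v)`.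
-/

section

variable {d : ℕ}

theorem totalDegree_monIdx {n : ℕ} (α : Idx d n) : (monIdx α).totalDegree = n := by
  rw [monIdx, totalDegree_monomial _ one_ne_zero, Finsupp.sum_fintype _ _ fun _ => rfl]
  simpa using Finset.Nat.mem_antidiagonalTuple.mp α.2

theorem PolySystem.linearMap_eq_of_totalDegree_le (P : PolySystem d) {M : Type*}
    [AddCommMonoid M] [Module ℝ M] {f g : MvPolynomial (Fin d) ℝ →ₗ[ℝ] M} {n : ℕ}
    (h : ∀ m ≤ n, ∀ α, f (P.vec m α) = g (P.vec m α))
    {p : MvPolynomial (Fin d) ℝ} (hp : p.totalDegree ≤ n) : f p = g p :=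
  LinearMap.eqOn_span (by rintro _ ⟨m, hm, α, rfl⟩; exact h m hm α) (P.spans n p hp)

section Kernels

variable (u : MvPolynomial (Fin d) ℝ →ₗ[ℝ] ℝ) (P : PolySystem d)

theorem Hmat_transpose (n : ℕ) : (Hmat u P n)ᵀ = Hmat u P n := by
  ext
  simp [Hmat, mul_comm]

theorem kerP_comm (m : ℕ) (x y : Fin d → ℝ) : kerP u P m x y = kerP u P m y x := by
  have hinv : (Hmat u P m)⁻¹ᵀ = (Hmat u P m)⁻¹ := by
    rw [transpose_nonsing_inv, Hmat_transpose]
  rw [kerP, kerP, Finset.sum_comm]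
  refine Finset.sum_congr rfl fun α _ => Finset.sum_congr rfl fun β _ => ?_
  rw [← congrFun₂ hinv α β, transpose_apply]
  ring

theorem kerLT_succ (n : ℕ) (x y : Fin d → ℝ) :
    kerLT u P (n + 1) x y = kerLT u P n x y + kerP u P n x y :=
  Finset.sum_range_succ _ _

theorem kerLT_comm (n : ℕ) (x y : Fin d → ℝ) : kerLT u P n x y = kerLT u P n y x :=
  Finset.sum_congr rfl fun m _ => kerP_comm u P m x y

/-- The polynomial `K_{n-1}(u; x, ·)`, indexed like `kerLT`. -/
noncomputable def kerPoly (n : ℕ) (x : Fin d → ℝ) : MvPolynomial (Fin d) ℝ :=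
  ∑ m ∈ Finset.range n, ∑ α, ∑ β, (eval x (P.vec m α) * (Hmat u P m)⁻¹ α β) • P.vec m β

theorem eval_kerPoly (n : ℕ) (x y : Fin d → ℝ) : eval y (kerPoly u P n x) = kerLT u P n x y := by
  simp only [kerPoly, kerLT, kerP, map_sum, smul_eval, mul_assoc]

theorem totalDegree_kerPoly_le (n : ℕ) (x : Fin d → ℝ) :
    (kerPoly u P (n + 1) x).totalDegree ≤ n := by
  rw [← mem_restrictTotalDegree]
  refine Submodule.sum_mem _ fun m hm => Submodule.sum_mem _ fun α _ =>
    Submodule.sum_mem _ fun β _ => Submodule.smul_mem _ _ ?_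
  rw [mem_restrictTotalDegree, P.degree_eq]
  exact Nat.lt_succ_iff.mp (Finset.mem_range.mp hm)

end Kernels

namespace IsOPS

variable {u : MvPolynomial (Fin d) ℝ →ₗ[ℝ] ℝ} {P : PolySystem d}

theorem apply_mul_vec_eq_zero (hP : IsOPS u P) {p : MvPolynomial (Fin d) ℝ} {n : ℕ}
    (hp : p.totalDegree < n) (β : Idx d n) : u (p * P.vec n β) = 0 := by
  rw [p.as_sum, Finset.sum_mul, map_sum]
  refine Finset.sum_eq_zero fun ν hν => ?_
  let γ : Idx d (∑ i, ν i) := ⟨ν, Finset.Nat.mem_antidiagonalTuple.mpr rfl⟩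
  have hγ : monomial ν (coeff ν p) = coeff ν p • monIdx γ := by
    rw [monIdx, Finsupp.equivFunOnFinite_symm_coe, smul_monomial, smul_eq_mul, mul_one]
  have hdeg : ∑ i, ν i < n := by
    rw [← Finsupp.sum_fintype ν (fun _ e => e) fun _ => rfl]
    exact (le_totalDegree hν).trans_lt hp
  rw [hγ, smul_mul_assoc, map_smul, hP.1 _ n hdeg γ β, smul_zero]

theorem apply_vec_mul_vec_of_ne (hP : IsOPS u P) {m n : ℕ} (h : m ≠ n) (α : Idx d m)
    (β : Idx d n) : u (P.vec m α * P.vec n β) = 0 := by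
  rcases h.lt_or_gt with h | h
  · exact hP.apply_mul_vec_eq_zero (by rwa [P.degree_eq]) β
  · rw [mul_comm]
    exact hP.apply_mul_vec_eq_zero (by rwa [P.degree_eq]) α

/-- A null vector `c` of `H_n` makes `Σ_β c_β ℙ_{n,β}` `u`-orthogonal to every polynomial of
degree `≤ n`, in particular to `𝕏_n`, so `c` is also a null vector of `⟨u, 𝕏_n ℙ_n^t⟩`. -/
theorem isUnit_det_Hmat (hP : IsOPS u P) (n : ℕ) : IsUnit (Hmat u P n).det := by
  rw [isUnit_iff_ne_zero, Ne, ← exists_mulVec_eq_zero_iff]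
  rintro ⟨c, hc, hHc⟩
  set q := ∑ β, c β • P.vec n β
  have hq : ∀ r : MvPolynomial (Fin d) ℝ, r.totalDegree ≤ n → u (r * q) = 0 := by
    intro r hr
    refine P.linearMap_eq_of_totalDegree_le (f := u ∘ₗ LinearMap.mulRight ℝ q) (g := 0)
      (fun m hm α => ?_) hr
    rcases hm.lt_or_eq with hm | rfl
    · simp [q, Finset.mul_sum, hP.apply_vec_mul_vec_of_ne hm.ne]
    · simpa [q, Hmat, mulVec, dotProduct, Finset.mul_sum, mul_comm] using congrFun hHc α
  refine hc (eq_zero_of_mulVec_eq_zero (hP.2 n).ne_zero (funext fun γ => ?_))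
  simpa [q, mulVec, dotProduct, Finset.mul_sum, mul_comm] using
    hq _ (totalDegree_monIdx γ).le

theorem apply_kerPoly_mul (hP : IsOPS u P) {n : ℕ} {p : MvPolynomial (Fin d) ℝ}
    (hp : p.totalDegree ≤ n) (x : Fin d → ℝ) : u (kerPoly u P (n + 1) x * p) = eval x p := by
  refine P.linearMap_eq_of_totalDegree_le (f := u ∘ₗ LinearMap.mulLeft ℝ (kerPoly u P (n + 1) x))
    (g := (aeval x).toLinearMap) (fun k hk γ => ?_) hp
  have hk_mem : k ∈ Finset.range (n + 1) := Finset.mem_range.mpr (Nat.lt_succ_of_le hk)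
  simp only [LinearMap.comp_apply, LinearMap.mulLeft_apply, AlgHom.toLinearMap_apply,
    kerPoly, Finset.sum_mul, map_sum, smul_mul_assoc, map_smul, smul_eq_mul]
  rw [Finset.sum_eq_single_of_mem k hk_mem fun m _ hmk => by simp [hP.apply_vec_mul_vec_of_ne hmk]]
  have hHinv := congrFun₂ (nonsing_inv_mul _ (hP.isUnit_det_Hmat k))
  simp_rw [mul_assoc, ← Finset.mul_sum]
  have hrow : ∀ α, ∑ β, (Hmat u P k)⁻¹ α β * u (P.vec k β * P.vec k γ) = (1 : Matrix _ _ ℝ) α γ :=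
    fun α => (mul_apply).symm.trans (hHinv α γ)
  simp only [hrow, one_apply, mul_ite, mul_one, mul_zero, Finset.sum_ite_eq', Finset.mem_univ,
    if_true, aeval_eq_eval]

end IsOPS

end

namespace Matrix

theorem vecMul_one_add_diagonal_mul_apply {ι R : Type*} [Fintype ι] [DecidableEq ι]
    [CommSemiring R] (w a : ι → R) (K : Matrix ι ι R) (j : ι) :
    (w ᵥ* (1 + diagonal a * K)) j = w j + ∑ i, a i * w i * K i j := by
  rw [vecMul_add, vecMul_one, Pi.add_apply]
  simp only [vecMul, dotProduct, diagonal_mul, mul_left_comm, mul_assoc]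

end Matrix

namespace Uvarov

variable {d N : ℕ} {u v : MvPolynomial (Fin d) ℝ →ₗ[ℝ] ℝ} {ξ : Fin N → Fin d → ℝ}
  {lam : Fin N → ℝ} {P Q : PolySystem d}

theorem kerLT_eq_add_sum (hv : ∀ p, v p = u p + ∑ i, lam i * eval (ξ i) p) (hP : IsOPS u P)
    (hQ : IsOPS v Q) (n : ℕ) (x y : Fin d → ℝ) :
    kerLT u P (n + 1) x y = kerLT v Q (n + 1) x y +
      ∑ i, lam i * kerLT v Q (n + 1) x (ξ i) * kerLT u P (n + 1) (ξ i) y := by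
  have h := hQ.apply_kerPoly_mul (totalDegree_kerPoly_le u P n y) x
  rw [hv, mul_comm, hP.apply_kerPoly_mul (totalDegree_kerPoly_le v Q n x)] at h
  simp only [map_mul, eval_kerPoly] at h
  rw [kerLT_comm u P _ x y, ← h]
  congr 1
  refine Finset.sum_congr rfl fun i _ => ?_
  rw [kerLT_comm u P _ y]
  ring

theorem vecMul_one_add_diagonal_mul_Kmat (hv : ∀ p, v p = u p + ∑ i, lam i * eval (ξ i) p)
    (hP : IsOPS u P) (hQ : IsOPS v Q) (n : ℕ) (x : Fin d → ℝ) :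
    (fun i => kerLT v Q (n + 1) x (ξ i)) ᵥ* (1 + diagonal lam * Kmat u P ξ (n + 1)) =
      Kvec u P ξ (n + 1) x := by
  funext j
  rw [vecMul_one_add_diagonal_mul_apply, Kvec, kerLT_comm u P _ (ξ j) x,
    kerLT_eq_add_sum hv hP hQ]
  rfl

theorem isUnit_det_one_add_diagonal_mul_Kmat (hv : ∀ p, v p = u p + ∑ i, lam i * eval (ξ i) p)
    (hP : IsOPS u P) (hQ : IsOPS v Q) (n : ℕ) :
    IsUnit (1 + diagonal lam * Kmat u P ξ (n + 1)).det := by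
  rw [isUnit_iff_ne_zero, Ne, ← exists_vecMul_eq_zero_iff]
  rintro ⟨w, hw, hwM⟩
  set q := ∑ i, (lam i * w i) • kerPoly u P (n + 1) (ξ i)
  have hq_deg : q.totalDegree ≤ n := by
    rw [← mem_restrictTotalDegree]
    refine Submodule.sum_mem _ fun i _ => Submodule.smul_mem _ _ ?_
    rw [mem_restrictTotalDegree]
    exact totalDegree_kerPoly_le u P n (ξ i)
  have hq_eval : ∀ j, eval (ξ j) q = -w j := by
    intro j
    have hwMj := congrFun hwM j
    rw [vecMul_one_add_diagonal_mul_apply, Pi.zero_apply] at hwMj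
    simp only [q, map_sum, smul_eval, eval_kerPoly]
    exact eq_neg_of_add_eq_zero_right hwMj
  have hvq : ∀ r : MvPolynomial (Fin d) ℝ, r.totalDegree ≤ n → v (q * r) = 0 := by
    intro r hr
    have hu : u (q * r) = ∑ i, lam i * w i * eval (ξ i) r := by
      simp only [q, Finset.sum_mul, map_sum, smul_mul_assoc, map_smul, smul_eq_mul,
        hP.apply_kerPoly_mul hr]
    rw [hv, hu, ← Finset.sum_add_distrib]
    refine Finset.sum_eq_zero fun i _ => ?_
    rw [map_mul, hq_eval]
    ring
  refine hw (funext fun j => ?_)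
  have := hvq _ (totalDegree_kerPoly_le v Q n (ξ j))
  rw [mul_comm, hQ.apply_kerPoly_mul hq_deg, hq_eval] at this
  simpa using this

theorem kerLT_eq_sub (hv : ∀ p, v p = u p + ∑ i, lam i * eval (ξ i) p) (hP : IsOPS u P)
    (hQ : IsOPS v Q) (n : ℕ) (x y : Fin d → ℝ) :
    kerLT v Q n x y = kerLT u P n x y -
      ∑ i, ∑ j, Kvec u P ξ n x i *
        (((1 + diagonal lam * Kmat u P ξ n)⁻¹ * diagonal lam) i j) * Kvec u P ξ n y j := by
  cases n with
  | zero => simp [kerLT, Kvec]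
  | succ n =>
    set M := 1 + diagonal lam * Kmat u P ξ (n + 1)
    have ha : (fun j => kerLT v Q (n + 1) x (ξ j)) = Kvec u P ξ (n + 1) x ᵥ* M⁻¹ := by
      rw [← vecMul_one_add_diagonal_mul_Kmat hv hP hQ, vecMul_vecMul,
        mul_nonsing_inv _ (isUnit_det_one_add_diagonal_mul_Kmat hv hP hQ n), vecMul_one]
    have hsum : ∑ i, ∑ j, Kvec u P ξ (n + 1) x i * (M⁻¹ * diagonal lam) i j *
        Kvec u P ξ (n + 1) y j =
          ∑ j, lam j * kerLT v Q (n + 1) x (ξ j) * kerLT u P (n + 1) (ξ j) y := by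
      rw [Finset.sum_comm]
      refine Finset.sum_congr rfl fun j _ => ?_
      rw [congrFun ha j]
      simp only [vecMul, dotProduct, Finset.mul_sum, Finset.sum_mul, mul_diagonal, Kvec]
      exact Finset.sum_congr rfl fun i _ => by ring
    rw [hsum, kerLT_eq_add_sum hv hP hQ]
    ring

end Uvarov

theorem uvarov_kernels_general
    {d N : ℕ}
    (u v : MvPolynomial (Fin d) ℝ →ₗ[ℝ] ℝ)
    (ξ : Fin N → (Fin d → ℝ))
    (lam : Fin N → ℝ)
    (hv : ∀ p : MvPolynomial (Fin d) ℝ, v p = u p + ∑ i, lam i * eval (ξ i) p)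
    (P : PolySystem d) (hP : IsOPS u P)
    (Q : PolySystem d) (hQ : IsOPS v Q) :
    (∀ (m : ℕ) (x y : Fin d → ℝ),
      kerP v Q m x y = kerP u P m x y -
        (∑ i, ∑ j, Kvec u P ξ (m + 1) x i *
          (((1 + Matrix.diagonal lam * Kmat u P ξ (m + 1))⁻¹ * Matrix.diagonal lam) i j) *
            Kvec u P ξ (m + 1) y j) +
        (∑ i, ∑ j, Kvec u P ξ m x i *
          (((1 + Matrix.diagonal lam * Kmat u P ξ m)⁻¹ * Matrix.diagonal lam) i j) *
            Kvec u P ξ m y j)) ∧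
    (∀ (n : ℕ) (x y : Fin d → ℝ),
      kerLT v Q (n + 1) x y = kerLT u P (n + 1) x y -
        ∑ i, ∑ j, Kvec u P ξ (n + 1) x i *
          (((1 + Matrix.diagonal lam * Kmat u P ξ (n + 1))⁻¹ * Matrix.diagonal lam) i j) *
            Kvec u P ξ (n + 1) y j) := by
  refine ⟨fun m x y => ?_, fun n => Uvarov.kerLT_eq_sub hv hP hQ (n + 1)⟩
  have hsucc := Uvarov.kerLT_eq_sub hv hP hQ (m + 1) x y
  rw [kerLT_succ, kerLT_succ] at hsucc
  linarith [Uvarov.kerLT_eq_sub hv hP hQ m x y]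

/-- Theorem 3.4. The kernels of a quasi-definite moment functional `u`
and of its quasi-definite Uvarov modification `v` are related by
`P_m(v;x,y) = P_m(u;x,y) - 𝖪_m(ξ,x)^t (I_N+Λ𝒦_m)⁻¹ Λ 𝖪_m(ξ,y)
  + 𝖪_{m-1}(ξ,x)^t (I_N+Λ𝒦_{m-1})⁻¹ Λ 𝖪_{m-1}(ξ,y)` for `m ≥ 0`, and
`K_n(v;x,y) = K_n(u;x,y) - 𝖪_n(ξ,x)^t (I_N+Λ𝒦_n)⁻¹ Λ 𝖪_n(ξ,y)` for `n ≥ 0`. -/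
theorem uvarov_kernels
    {d N : ℕ} (hd : 1 ≤ d) (hN : 1 ≤ N)
    (u v : MvPolynomial (Fin d) ℝ →ₗ[ℝ] ℝ)
    (ξ : Fin N → (Fin d → ℝ)) (hξ : Function.Injective ξ)
    (lam : Fin N → ℝ) (hlam : ∀ i, lam i ≠ 0)
    (hv : ∀ p : MvPolynomial (Fin d) ℝ, v p = u p + ∑ i, lam i * eval (ξ i) p)
    (P : PolySystem d) (hP : IsOPS u P)
    (Q : PolySystem d) (hQ : IsOPS v Q) :
    (∀ (m : ℕ) (x y : Fin d → ℝ),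
      kerP v Q m x y = kerP u P m x y -
        (∑ i, ∑ j, Kvec u P ξ (m + 1) x i *
          (((1 + Matrix.diagonal lam * Kmat u P ξ (m + 1))⁻¹ * Matrix.diagonal lam) i j) *
            Kvec u P ξ (m + 1) y j) +
        (∑ i, ∑ j, Kvec u P ξ m x i *
          (((1 + Matrix.diagonal lam * Kmat u P ξ m)⁻¹ * Matrix.diagonal lam) i j) *
            Kvec u P ξ m y j)) ∧
    (∀ (n : ℕ) (x y : Fin d → ℝ),
      kerLT v Q (n + 1) x y = kerLT u P (n + 1) x y -
        ∑ i, ∑ j, Kvec u P ξ (n + 1) x i *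
          (((1 + Matrix.diagonal lam * Kmat u P ξ (n + 1))⁻¹ * Matrix.diagonal lam) i j) *
            Kvec u P ξ (n + 1) y j) :=
  uvarov_kernels_general u v ξ lam hv P hP Q hQ
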